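/- Let (r,a,c) and (s,b,d) be two rank one data. Then: (a) for every i ∈ Z/fZ, p^f − 1 divides Σ_{j=0}^{f−1} p^j·r_{i−j} and divides Σ_{j=0}^{f−1} p^j·s_{i−j}; write α_i(r) := (Σ_{j=0}^{f−1} p^j·r_{i−j})/(p^f − 1) and α_i(s) := (Σ_{j=0}^{f−1} p^j·s_{i−j})/(p^f − 1). (b) dim_F ker ∂ ≤ 1. (c) ker ∂ ≠ 0 if and only if all of the following hold: Π_{i=0}^{f−1} a_i = Π_{i=0}^{f−1} b_i; c_0 − α_0(r) = d_0 − α_0(s) in Z/mZ; and α_i(r) ≥ α_i(s) for all i. (This is the paper's criterion that there is a nonzero morphism M(r,a,c) → M(s,b,d) if and only if the associated Galois characters agree and α_i(M) ≥ α_i(N) for each i.) -/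

import Mathlib

open PowerSeries

noncomputable section

/-- The map `φ : Σ αₙ uⁿ ↦ Σ αₙ u^{p·n}` on `F⟦u⟧`. -/
noncomputable def phiPS (p : ℕ) (F : Type) [CommRing F] :
    PowerSeries F →ₗ[F] PowerSeries F where
  toFun g := PowerSeries.mk fun n => if p ∣ n then PowerSeries.coeff (R := F) (n / p) g else 0
  map_add' g h := by
    ext n
    by_cases hn : p ∣ n <;> simp [PowerSeries.coeff_mk, hn]
  map_smul' t g := by
    ext n
    by_cases hn : p ∣ n <;> simp [PowerSeries.coeff_mk, hn]

/-- The space of tuples `(μ_i)_{i ∈ ℤ/f}` of power series such that every nonzero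
coefficient of `μ_i` occurs in a degree `n` with `n ≡ γ i (mod m)`. -/
def Ctuples (F : Type) [Field F] (f m : ℕ) (γ : ZMod f → ZMod m) :
    Submodule F (ZMod f → PowerSeries F) where
  carrier := {μ | ∀ (i : ZMod f) (n : ℕ), PowerSeries.coeff (R := F) n (μ i) ≠ 0 → (n : ZMod m) = γ i}
  add_mem' := by
    intro μ ν hμ hν i n hn
    rw [Pi.add_apply, map_add] at hn
    by_cases h1 : PowerSeries.coeff (R := F) n (μ i) = 0
    · refine hν i n fun h2 => hn ?_
      rw [h1, h2, add_zero]
    · exact hμ i n h1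
  zero_mem' := by
    intro i n hn
    simp at hn
  smul_mem' := by
    intro t μ hμ i n hn
    refine hμ i n fun h => hn ?_
    rw [Pi.smul_apply, map_smul, h, smul_zero]

/-- The map `∂ : (μ_i)_i ↦ (−a_i u^{r_i} μ_i + b_i u^{s_i} φ(μ_{i−1}))_i`. -/
noncomputable def Dmap (p : ℕ) (F : Type) [Field F] (f : ℕ) (r s : ZMod f → ℕ)
    (a b : ZMod f → Fˣ) :
    (ZMod f → PowerSeries F) →ₗ[F] (ZMod f → PowerSeries F) :=
  LinearMap.pi fun i =>
    (LinearMap.mulLeft F (PowerSeries.C (R := F) (b i : F) * PowerSeries.X ^ s i)).comp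
        ((phiPS p F).comp (LinearMap.proj (i - 1)))
      - (LinearMap.mulLeft F (PowerSeries.C (R := F) (a i : F) * PowerSeries.X ^ r i)).comp
        (LinearMap.proj i)

open Finset

/-!
Compare valuations and lowest coefficients in `b_i u^{s_i} φ(μ_{i-1}) = a_i u^{r_i} μ_i`.
If `μ ≠ 0` is in the kernel, this equation forces every `μ_i` to be nonzero, and the orders
`w_i` of the `μ_i` satisfy `r_i + w_i = s_i + p w_{i-1}`. Summing this relation with weights
`p^j` around the cycle `ℤ/f` gives `(p^f - 1) w_i = Σ_j p^j (r_{i-j} - s_{i-j})`, i.e.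
`w = α(r) - α(s)`. So the order of `μ_0` is fixed, and the coefficient of `u^{w_0}` in `μ_0`
determines `μ`, whence `dim ker ∂ ≤ 1`. The lowest coefficients satisfy
`a_i ℓ_i = b_i ℓ_{i-1}`; taking the product over `i` gives `Π a_i = Π b_i`. The congruence
condition is `w_0 ≡ c_0 - d_0`, which holds because `μ ∈ C^0`. Conversely, under these
conditions `μ_i = λ_i u^{w_i}` is a kernel element, where `λ_i / λ_{i-1} = b_i / a_i`.
The divisibility `p^f - 1 ∣ Σ_j p^j r_{i-j}` is the same telescoping sum applied to
`p c_{i-1} = c_i + r_i` in `ℤ/m`, reduced modulo `p^f - 1`.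
-/

section TwistedSum

variable {f : ℕ} {R : Type*}

def twistedSum [CommSemiring R] (p : R) (t : ZMod f → R) (i : ZMod f) : R :=
  ∑ j ∈ range f, p ^ j * t (i - j)

@[norm_cast]
lemma Nat.cast_twistedSum [CommSemiring R] (p : ℕ) (t : ZMod f → ℕ) (i : ZMod f) :
    ((twistedSum p t i : ℕ) : R) = twistedSum (p : R) (fun j => (t j : R)) i := by
  simp [twistedSum]

lemma twistedSum_sub_one [CommSemiring R] (p : R) (t : ZMod f → R) (i : ZMod f) :
    p * twistedSum p t (i - 1) + t i = twistedSum p t i + p ^ f * t i := by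
  have hshift :
      p * twistedSum p t (i - 1) = ∑ j ∈ range f, p ^ (j + 1) * t (i - (j + 1 : ℕ)) := by
    rw [twistedSum, mul_sum]
    refine sum_congr rfl fun j _ => ?_
    rw [Nat.cast_succ, sub_add_eq_sub_sub_swap, pow_succ]
    ring
  have hsplit := sum_range_succ' (fun j => p ^ j * t (i - j)) f
  rw [sum_range_succ] at hsplit
  simp only [ZMod.natCast_self, sub_zero, Nat.cast_zero, pow_zero, one_mul] at hsplit
  rw [hshift, twistedSum, ← hsplit]

lemma twistedSum_eq_of_recursion [CommRing R] {p : R} {t γ : ZMod f → R}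
    (h : ∀ i, p * γ (i - 1) = γ i + t i) (i : ZMod f) :
    twistedSum p t i = (p ^ f - 1) * γ i := by
  have hterm : ∀ j : ℕ,
      p ^ j * t (i - j) = p ^ (j + 1) * γ (i - (j + 1 : ℕ)) - p ^ j * γ (i - j) := by
    intro j
    have := h (i - j)
    rw [Nat.cast_succ, ← sub_sub]
    linear_combination (-p ^ j) * this
  rw [twistedSum, sum_congr rfl fun j _ => hterm j,
    sum_range_sub (fun j => p ^ j * γ (i - j)) f]
  simp only [ZMod.natCast_self, sub_zero, Nat.cast_zero, pow_zero, one_mul]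
  ring

lemma dvd_twistedSum {p m : ℕ} {t : ZMod f → ℕ} {γ : ZMod f → ZMod m} (hp : 0 < p)
    (hm : p ^ f - 1 ∣ m)
    (h : ∀ i, (p : ZMod m) * γ (i - 1) = γ i + t i) (i : ZMod f) :
    p ^ f - 1 ∣ twistedSum p t i := by
  set π := ZMod.castHom hm (ZMod (p ^ f - 1))
  have hrec : ∀ i, (p : ZMod (p ^ f - 1)) * π (γ (i - 1)) = π (γ i) + t i := fun i => by
    simpa using congrArg π (h i)
  rw [← ZMod.natCast_eq_zero_iff, Nat.cast_twistedSum,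
    twistedSum_eq_of_recursion (γ := fun i => π (γ i)) hrec]
  have hpow : (p : ZMod (p ^ f - 1)) ^ f - 1 = 0 := by
    rw [← Nat.cast_pow, ← Nat.cast_one (R := ZMod _), ← Nat.cast_sub (Nat.one_le_pow _ _ hp),
      ZMod.natCast_self]
  rw [hpow, zero_mul]

def alpha (p : ℕ) (t : ZMod f → ℕ) (i : ZMod f) : ℕ :=
  twistedSum p t i / (p ^ f - 1)

variable [NeZero f] {p : ℕ} (hp : 1 < p)
include hp

lemma alpha_eq_of_recursion {t x : ZMod f → ℕ} (h : ∀ i, p * x (i - 1) = x i + t i)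
    (i : ZMod f) : alpha p t i = x i := by
  have hpow : 1 < p ^ f := Nat.one_lt_pow (NeZero.ne f) hp
  have hsum : twistedSum p t i = (p ^ f - 1) * x i := by
    have hrec : ∀ i, (p : ℤ) * x (i - 1) = x i + t i := fun i => mod_cast h i
    zify [hpow.le]
    exact twistedSum_eq_of_recursion (t := fun i => (t i : ℤ)) (γ := fun i => (x i : ℤ))
      hrec i
  rw [alpha, hsum, Nat.mul_div_cancel_left _ (Nat.sub_pos_of_lt hpow)]

lemma alpha_sub_one {t : ZMod f → ℕ} (hdvd : ∀ i, p ^ f - 1 ∣ twistedSum p t i)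
    (i : ZMod f) :
    p * alpha p t (i - 1) = alpha p t i + t i := by
  have hpow : 1 < p ^ f := Nat.one_lt_pow (NeZero.ne f) hp
  refine Nat.eq_of_mul_eq_mul_left (Nat.sub_pos_of_lt hpow) ?_
  have hshift := twistedSum_sub_one p t i
  rw [mul_left_comm, alpha, alpha, Nat.mul_div_cancel' (hdvd _), mul_add,
    Nat.mul_div_cancel' (hdvd _)]
  zify [hpow.le] at hshift ⊢
  linear_combination hshift

lemma alpha_eq_add_of_recursion {r s w : ZMod f → ℕ}
    (hs : ∀ i, p ^ f - 1 ∣ twistedSum p s i)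
    (hw : ∀ i, r i + w i = s i + p * w (i - 1)) (i : ZMod f) :
    alpha p r i = alpha p s i + w i := by
  refine alpha_eq_of_recursion hp (x := fun i => alpha p s i + w i) (fun i => ?_) i
  have := alpha_sub_one hp hs i
  have := hw i
  rw [mul_add]
  omega

lemma add_alpha_sub_alpha {r s : ZMod f → ℕ} (hr : ∀ i, p ^ f - 1 ∣ twistedSum p r i)
    (hs : ∀ i, p ^ f - 1 ∣ twistedSum p s i) (hle : ∀ i, alpha p s i ≤ alpha p r i)
    (i : ZMod f) :
    r i + (alpha p r i - alpha p s i) = s i + p * (alpha p r (i - 1) - alpha p s (i - 1)) := by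
  have := alpha_sub_one hp hr i
  have := alpha_sub_one hp hs i
  have := hle i
  have := Nat.mul_le_mul_left p (hle (i - 1))
  rw [Nat.mul_sub]
  omega

end TwistedSum

section Cyclic

variable {f : ℕ} [NeZero f]

lemma ZMod.forall_of_sub_one {P : ZMod f → Prop} {i₀ : ZMod f} (h₀ : P i₀)
    (h : ∀ i, P (i - 1) → P i) (i : ZMod f) : P i := by
  have key : ∀ k : ℕ, P (i₀ + k) := by
    intro k
    induction k with
    | zero => simpa using h₀
    | succ k ih => exact h _ (by rwa [Nat.cast_succ, ← add_assoc, add_sub_cancel_right])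
  simpa using key (i - i₀).val

lemma ZMod.prod_range_natCast {M : Type*} [CommMonoid M] (g : ZMod f → M) :
    ∏ k ∈ range f, g k = ∏ i, g i :=
  prod_nbij' (fun k => (k : ZMod f)) ZMod.val (by simp) (by simp [ZMod.val_lt])
    (fun k hk => ZMod.val_cast_of_lt (mem_range.1 hk)) (by simp) (by simp)

lemma exists_eq_mul_sub_one_of_prod_eq_one {G : Type*} [CommGroup G] {g : ZMod f → G}
    (hg : ∏ i, g i = 1) : ∃ ℓ : ZMod f → G, ∀ i, ℓ i = g i * ℓ (i - 1) := by
  set L : ℕ → G := fun n => ∏ k ∈ range n, g ((k : ZMod f) + 1)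
  have hL : Function.Periodic L f := fun n => by
    have hshift : ∏ k ∈ range f, g (((n + k : ℕ) : ZMod f) + 1) = 1 := by
      simp_rw [Nat.cast_add]
      rw [ZMod.prod_range_natCast (fun i => g ((n : ZMod f) + i + 1))]
      exact (Equiv.prod_comp (Equiv.addLeft (n : ZMod f)) (fun i => g (i + 1))).trans
        ((Equiv.prod_comp (Equiv.addRight 1) g).trans hg)
    simp only [L, prod_range_add, hshift, mul_one]
  refine ⟨fun i => L i.val, fun i => ?_⟩
  obtain ⟨j, rfl⟩ : ∃ j, i = j + 1 := ⟨i - 1, by ring⟩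
  have hval : ((j + 1 : ZMod f)).val = (j.val + 1) % f := by
    rw [← ZMod.val_natCast, Nat.cast_succ, ZMod.natCast_zmod_val]
  simp only [add_sub_cancel_right, hval, hL.map_mod_nat, L, prod_range_succ,
    ZMod.natCast_zmod_val]
  exact mul_comm _ _

end Cyclic

section PhiPS

variable {R : Type} [CommRing R] {p : ℕ}

lemma coeff_phiPS (g : R⟦X⟧) (n : ℕ) :
    coeff n (phiPS p R g) = if p ∣ n then coeff (n / p) g else 0 := by
  simp [phiPS, coeff_mk]

lemma coeff_phiPS_mul (hp : 0 < p) (g : R⟦X⟧) (n : ℕ) :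
    coeff (p * n) (phiPS p R g) = coeff n g := by
  rw [coeff_phiPS, if_pos (dvd_mul_right p n), Nat.mul_div_cancel_left _ hp]

lemma phiPS_monomial (hp : 0 < p) (k : ℕ) (x : R) :
    phiPS p R (monomial k x) = monomial (p * k) x := by
  ext n
  rw [coeff_phiPS, coeff_monomial, coeff_monomial]
  by_cases hdvd : p ∣ n
  · obtain ⟨j, rfl⟩ := hdvd
    simp [Nat.mul_div_cancel_left _ hp, Nat.mul_right_inj hp.ne']
  · rw [if_neg hdvd, if_neg]
    rintro rfl
    exact hdvd (dvd_mul_right p k)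

lemma order_phiPS (hp : 0 < p) {g : R⟦X⟧} (hg : g ≠ 0) :
    (phiPS p R g).order = (p * g.order.toNat : ℕ) := by
  refine order_eq_nat.2 ⟨by rw [coeff_phiPS_mul hp]; exact coeff_order hg, fun i hi => ?_⟩
  rw [coeff_phiPS]
  split_ifs with hdvd
  · obtain ⟨j, rfl⟩ := hdvd
    rw [Nat.mul_div_cancel_left _ hp]
    exact coeff_of_lt_order_toNat _ (Nat.lt_of_mul_lt_mul_left hi)
  · rfl

lemma phiPS_ne_zero (hp : 0 < p) {g : R⟦X⟧} (hg : g ≠ 0) : phiPS p R g ≠ 0 := by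
  intro h
  have := order_phiPS hp hg
  rw [h, order_zero] at this
  exact ENat.top_ne_natCast _ this

lemma order_toNat_phiPS (hp : 0 < p) {g : R⟦X⟧} (hg : g ≠ 0) :
    (phiPS p R g).order.toNat = p * g.order.toNat := by
  rw [order_phiPS hp hg, ENat.toNat_natCast]

end PhiPS

section Monomial

variable {R : Type*} [CommRing R] [IsDomain R] {n : ℕ} {x : R} {g : R⟦X⟧}

lemma order_toNat_monomial_mul (hx : x ≠ 0) (hg : g ≠ 0) :
    (monomial n x * g).order.toNat = n + g.order.toNat := by
  rw [order_mul, order_monomial_of_ne_zero _ _ hx,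
    ENat.toNat_add (ENat.natCast_ne_top _) (order_eq_top.not.2 hg), ENat.toNat_natCast]

lemma coeff_order_monomial_mul (hx : x ≠ 0) (hg : g ≠ 0) :
    coeff (monomial n x * g).order.toNat (monomial n x * g) = x * coeff g.order.toNat g := by
  rw [order_toNat_monomial_mul hx hg, monomial_eq_C_mul_X_pow, mul_assoc, coeff_C_mul, add_comm,
    coeff_X_pow_mul]

end Monomial

section Kernel

variable {p : ℕ} {F : Type} [Field F] {f : ℕ} {r s : ZMod f → ℕ} {a b : ZMod f → Fˣ}
  {μ : ZMod f → F⟦X⟧}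

lemma Dmap_eq_zero_iff : Dmap p F f r s a b μ = 0 ↔
    ∀ i, monomial (s i) (b i : F) * phiPS p F (μ (i - 1)) = monomial (r i) (a i : F) * μ i := by
  simp only [funext_iff, Dmap, LinearMap.pi_apply, LinearMap.sub_apply, LinearMap.comp_apply,
    LinearMap.mulLeft_apply, LinearMap.proj_apply, Pi.zero_apply, sub_eq_zero,
    monomial_eq_C_mul_X_pow]

variable (hμ : Dmap p F f r s a b μ = 0)
include hμ

lemma ne_zero_of_Dmap_eq_zero [NeZero f] (hp : 0 < p) (hne : μ ≠ 0) (i : ZMod f) :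
    μ i ≠ 0 := by
  obtain ⟨i₀, hi₀⟩ := Function.ne_iff.1 hne
  refine ZMod.forall_of_sub_one (P := fun i => μ i ≠ 0) hi₀ (fun i hi h0 => ?_) i
  have h := Dmap_eq_zero_iff.1 hμ i
  rw [h0, mul_zero] at h
  have hmon : monomial (s i) (b i : F) ≠ 0 := fun h =>
    (b i).ne_zero (by simpa using congrArg (coeff (s i)) h)
  exact mul_ne_zero hmon (phiPS_ne_zero hp hi) h

lemma order_toNat_of_Dmap_eq_zero (hp : 0 < p) (hne : ∀ i, μ i ≠ 0) (i : ZMod f) :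
    r i + (μ i).order.toNat = s i + p * (μ (i - 1)).order.toNat := by
  have h := congrArg (fun g => g.order.toNat) (Dmap_eq_zero_iff.1 hμ i)
  rwa [order_toNat_monomial_mul (b i).ne_zero (phiPS_ne_zero hp (hne _)),
    order_toNat_monomial_mul (a i).ne_zero (hne i), order_toNat_phiPS hp (hne _), eq_comm] at h

lemma coeff_order_of_Dmap_eq_zero (hp : 0 < p) (hne : ∀ i, μ i ≠ 0) (i : ZMod f) :
    (a i : F) * coeff (μ i).order.toNat (μ i) =
      b i * coeff (μ (i - 1)).order.toNat (μ (i - 1)) := by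
  have h := congrArg (fun g => coeff g.order.toNat g) (Dmap_eq_zero_iff.1 hμ i)
  rwa [coeff_order_monomial_mul (b i).ne_zero (phiPS_ne_zero hp (hne _)),
    coeff_order_monomial_mul (a i).ne_zero (hne i), order_toNat_phiPS hp (hne _),
    coeff_phiPS_mul hp, eq_comm] at h

lemma prod_eq_prod_of_Dmap_eq_zero [NeZero f] (hp : 0 < p) (hne : μ ≠ 0) :
    ∏ i, a i = ∏ i, b i := by
  have hne' := ne_zero_of_Dmap_eq_zero hμ hp hne
  set ℓ : ZMod f → F := fun i => coeff (μ i).order.toNat (μ i)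
  have h := prod_congr rfl fun i (_ : i ∈ univ) => coeff_order_of_Dmap_eq_zero hμ hp hne' i
  have hshift : ∏ i, ℓ (i - 1) = ∏ i, ℓ i :=
    Fintype.prod_equiv (Equiv.subRight 1) _ _ fun _ => rfl
  rw [prod_mul_distrib, prod_mul_distrib, hshift] at h
  ext
  push_cast
  exact mul_right_cancel₀ (prod_ne_zero_iff.2 fun i _ => coeff_order (hne' i)) h

lemma alpha_eq_add_order_of_Dmap_eq_zero [NeZero f] (hp : 1 < p)
    (hs : ∀ i, p ^ f - 1 ∣ twistedSum p s i) (hne : μ ≠ 0) (i : ZMod f) :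
    alpha p r i = alpha p s i + (μ i).order.toNat :=
  alpha_eq_add_of_recursion hp hs
    (order_toNat_of_Dmap_eq_zero hμ (by omega) (ne_zero_of_Dmap_eq_zero hμ (by omega) hne)) i

end Kernel

lemma Submodule.rank_comap_subtype_le {R M : Type*} [Ring R] [AddCommGroup M] [Module R M]
    (N K : Submodule R M) : Module.rank R (K.comap N.subtype) ≤ Module.rank R K :=
  LinearMap.rank_le_of_injective ((N.subtype ∘ₗ (K.comap N.subtype).subtype).codRestrict K
    fun x => x.2) fun _ _ h => Subtype.ext (Subtype.ext (congrArg (fun y : K => (y : M)) h))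

section Morphisms

variable {p : ℕ} {F : Type} [Field F] {f : ℕ} [NeZero f] {m : ℕ} {r s : ZMod f → ℕ}
  {a b : ZMod f → Fˣ} (hp : 1 < p) (hs : ∀ i, p ^ f - 1 ∣ twistedSum p s i)
include hp hs

lemma rank_ker_Dmap_le_one : Module.rank F (LinearMap.ker (Dmap p F f r s a b)) ≤ 1 := by
  let Φ := coeff (alpha p r 0 - alpha p s 0) ∘ₗ LinearMap.proj 0 ∘ₗ
    (LinearMap.ker (Dmap p F f r s a b)).subtype
  suffices hΦ : LinearMap.ker Φ = ⊥ from
    (LinearMap.rank_le_of_injective Φ (LinearMap.ker_eq_bot.1 hΦ)).trans (Module.rank_self F).le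
  refine LinearMap.ker_eq_bot'.2 fun μ hΦ => ?_
  by_contra hne
  have hne' : μ.1 ≠ 0 := fun h => hne (Subtype.ext h)
  have hord := alpha_eq_add_order_of_Dmap_eq_zero μ.2 hp hs hne' 0
  refine coeff_order (ne_zero_of_Dmap_eq_zero μ.2 (by omega) hne' 0) ?_
  rwa [show (μ.1 0).order.toNat = alpha p r 0 - alpha p s 0 by omega]

variable {γ : ZMod f → ZMod m}

lemma conditions_of_comap_ker_Dmap_ne_bot
    (hK : Submodule.comap (Ctuples F f m γ).subtype (LinearMap.ker (Dmap p F f r s a b)) ≠ ⊥) :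
    ∏ i, a i = ∏ i, b i ∧ (alpha p r 0 : ZMod m) - alpha p s 0 = γ 0 ∧
      ∀ i, alpha p s i ≤ alpha p r i := by
  obtain ⟨μ, hμ, hne⟩ := (Submodule.ne_bot_iff _).1 hK
  have hne' : (μ : ZMod f → F⟦X⟧) ≠ 0 := fun h => hne (Subtype.ext h)
  have hα := alpha_eq_add_order_of_Dmap_eq_zero hμ hp hs hne'
  refine ⟨prod_eq_prod_of_Dmap_eq_zero hμ (by omega) hne', ?_,
    fun i => (hα i).symm ▸ Nat.le_add_right _ _⟩
  rw [hα 0, Nat.cast_add, add_sub_cancel_left]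
  exact μ.2 0 _ (coeff_order (ne_zero_of_Dmap_eq_zero hμ (by omega) hne' 0))

lemma comap_ker_Dmap_ne_bot_of_conditions (hr : ∀ i, p ^ f - 1 ∣ twistedSum p r i)
    (hγ : ∀ i, (p : ZMod m) * γ (i - 1) = γ i + r i - s i) (hab : ∏ i, a i = ∏ i, b i)
    (h₀ : (alpha p r 0 : ZMod m) - alpha p s 0 = γ 0)
    (hle : ∀ i, alpha p s i ≤ alpha p r i) :
    Submodule.comap (Ctuples F f m γ).subtype (LinearMap.ker (Dmap p F f r s a b)) ≠ ⊥ := by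
  set w : ZMod f → ℕ := fun i => alpha p r i - alpha p s i
  have hw : ∀ i, r i + w i = s i + p * w (i - 1) := add_alpha_sub_alpha hp hr hs hle
  have hwγ : ∀ i, (w i : ZMod m) = γ i := by
    refine ZMod.forall_of_sub_one (P := fun i => (w i : ZMod m) = γ i) (i₀ := 0) ?_
      fun i hi => ?_
    · rw [← h₀, Nat.cast_sub (hle 0)]
    · have := congrArg (Nat.cast : ℕ → ZMod m) (hw i)
      push_cast at this
      linear_combination this + (p : ZMod m) * hi + hγ i
  obtain ⟨ℓ, hℓ⟩ := exists_eq_mul_sub_one_of_prod_eq_one (g := fun i => b i / a i)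
    (by rw [prod_div_distrib, hab, div_self'])
  set μ : ZMod f → F⟦X⟧ := fun i => monomial (w i) (ℓ i : F)
  have hμC : μ ∈ Ctuples F f m γ := fun i n hn => by
    rw [coeff_monomial] at hn
    split_ifs at hn with h
    · rw [h, hwγ]
    · exact absurd rfl hn
  have hμ : Dmap p F f r s a b μ = 0 := Dmap_eq_zero_iff.2 fun i => by
    simp only [μ, phiPS_monomial (by omega : 0 < p), monomial_mul_monomial, hw i, hℓ i]
    push_cast
    field_simp
  rw [Submodule.ne_bot_iff]
  refine ⟨⟨μ, hμC⟩, hμ, fun h => (ℓ 0).ne_zero ?_⟩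
  simpa [μ] using congrArg (fun x => coeff (w 0) (x.1 0)) h

end Morphisms

theorem statement_13_general
    (p : ℕ) (hp : p.Prime) (F : Type) [Field F]
    (f m : ℕ) [NeZero f] (hm : p ^ f - 1 ∣ m)
    (r : ZMod f → ℕ) (a : ZMod f → Fˣ) (c : ZMod f → ZMod m)
    (hc : ∀ i, (p : ZMod m) * c (i - 1) = c i + (r i : ZMod m))
    (s : ZMod f → ℕ) (b : ZMod f → Fˣ) (d : ZMod f → ZMod m)
    (hd : ∀ i, (p : ZMod m) * d (i - 1) = d i + (s i : ZMod m)) :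
    let C0 := Ctuples F f m fun i => c i - d i
    let D := Dmap p F f r s a b
    let Kr : Submodule F ↥C0 := Submodule.comap C0.subtype (LinearMap.ker D)
    let αr : ZMod f → ℕ := fun i =>
      (∑ j ∈ Finset.range f, p ^ j * r (i - (j : ZMod f))) / (p ^ f - 1)
    let αs : ZMod f → ℕ := fun i =>
      (∑ j ∈ Finset.range f, p ^ j * s (i - (j : ZMod f))) / (p ^ f - 1)
    ((∀ i : ZMod f, p ^ f - 1 ∣ ∑ j ∈ Finset.range f, p ^ j * r (i - (j : ZMod f))) ∧
      (∀ i : ZMod f, p ^ f - 1 ∣ ∑ j ∈ Finset.range f, p ^ j * s (i - (j : ZMod f)))) ∧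
    Module.rank F ↥Kr ≤ 1 ∧
    (Kr ≠ ⊥ ↔
      ((∏ i : ZMod f, a i) = (∏ i : ZMod f, b i) ∧
        c 0 - (αr 0 : ZMod m) = d 0 - (αs 0 : ZMod m) ∧
        ∀ i : ZMod f, αs i ≤ αr i)) := by
  intro C0 D Kr αr αs
  have hαr : αr = alpha p r := rfl
  have hαs : αs = alpha p s := rfl
  rw [hαr, hαs]
  have hr : ∀ i, p ^ f - 1 ∣ twistedSum p r i := dvd_twistedSum hp.pos hm hc
  have hs : ∀ i, p ^ f - 1 ∣ twistedSum p s i := dvd_twistedSum hp.pos hm hd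
  refine ⟨⟨hr, hs⟩, (Submodule.rank_comap_subtype_le C0 _).trans
    (rank_ker_Dmap_le_one hp.one_lt hs), fun hK => ?_, ?_⟩
  · obtain ⟨hab, h₀, hle⟩ := conditions_of_comap_ker_Dmap_ne_bot hp.one_lt hs hK
    exact ⟨hab, by linear_combination -h₀, hle⟩
  · rintro ⟨hab, h₀, hle⟩
    refine comap_ker_Dmap_ne_bot_of_conditions hp.one_lt hs hr (fun i => ?_) hab ?_ hle
    · linear_combination hc i - hd i
    · linear_combination -h₀

/-- (a) `p^f − 1` divides `Σ_{j<f} p^j r_{i−j}` and `Σ_{j<f} p^j s_{i−j}`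
for every `i`, so the quantities `α_i(r)`, `α_i(s)` are (natural) integers;
(b) `dim_F ker ∂ ≤ 1`;  (c) `ker ∂ ≠ 0` if and only if `Π a_i = Π b_i`,
`c_0 − α_0(r) = d_0 − α_0(s)` in `ℤ/m`, and `α_i(r) ≥ α_i(s)` for all `i`. -/
theorem statement_13
    (p : ℕ) (hp : p.Prime) (F : Type) [Field F] [Fintype F] [CharP F p]
    (f e m : ℕ) [NeZero f] (he : 1 ≤ e) (hm1 : 1 ≤ m) (hm : p ^ f - 1 ∣ m)
    (e' : ℕ) (he' : e' = e * m)
    (r : ZMod f → ℕ) (a : ZMod f → Fˣ) (c : ZMod f → ZMod m)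
    (hr : ∀ i, r i ≤ e') (hc : ∀ i, (p : ZMod m) * c (i - 1) = c i + (r i : ZMod m))
    (s : ZMod f → ℕ) (b : ZMod f → Fˣ) (d : ZMod f → ZMod m)
    (hs : ∀ i, s i ≤ e') (hd : ∀ i, (p : ZMod m) * d (i - 1) = d i + (s i : ZMod m)) :
    let C0 := Ctuples F f m fun i => c i - d i
    let D := Dmap p F f r s a b
    let Kr : Submodule F ↥C0 := Submodule.comap C0.subtype (LinearMap.ker D)
    let αr : ZMod f → ℕ := fun i =>
      (∑ j ∈ Finset.range f, p ^ j * r (i - (j : ZMod f))) / (p ^ f - 1)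
    let αs : ZMod f → ℕ := fun i =>
      (∑ j ∈ Finset.range f, p ^ j * s (i - (j : ZMod f))) / (p ^ f - 1)
    ((∀ i : ZMod f, p ^ f - 1 ∣ ∑ j ∈ Finset.range f, p ^ j * r (i - (j : ZMod f))) ∧
      (∀ i : ZMod f, p ^ f - 1 ∣ ∑ j ∈ Finset.range f, p ^ j * s (i - (j : ZMod f)))) ∧
    Module.rank F ↥Kr ≤ 1 ∧
    (Kr ≠ ⊥ ↔
      ((∏ i : ZMod f, a i) = (∏ i : ZMod f, b i) ∧
        c 0 - (αr 0 : ZMod m) = d 0 - (αs 0 : ZMod m) ∧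
        ∀ i : ZMod f, αs i ≤ αr i)) :=
  statement_13_general p hp F f m hm r a c hc s b d hd
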